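/- arXiv:2203.00163 — 2 statements merged into one kernel-verified Lean document; each statement's English description precedes it below -/
import Mathlib

section
/- Fix a real exponent s > 2 and m₁ ∈ (0,1), and define g(θ) = m₁ f_s(θ) + (1−m₁) f_s(θ − π). Then g has exactly one zero in the open interval (0, π) and exactly one zero in the open interval (π, 2π). -/
/-!
Writing `r = 2 sin(θ/2)` and `r' = 2 cos(θ/2)` for the chords from `θ` to the two masses at `0`
and `π`, one has `g θ = sin θ · φ θ` with `φ θ = m₁ (r^{-s} - 1) - (1 - m₁) (r'^{-s} - 1)`.
On `(0, π)` the chord `r` grows and `r'` shrinks, so `φ` is strictly decreasing; it is positive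
at `π/3`, where `r = 1`, and negative at `2π/3`, where `r' = 1`. Hence `φ`, and with it `g`, has
exactly one zero in `(0, π)`. The reflection `θ ↦ 2π - θ` exchanges the two intervals and turns
`g` into `-g`.
-/

open Real Set

/-- `f_s(θ) = sin(θ)·(2^{-s}|sin(θ/2)|^{-s} − 1)`, the coorbital kernel function
for a homogeneous potential with exponent `s`. -/
noncomputable def coorbitalF (s θ : ℝ) : ℝ :=
  Real.sin θ * ((2 : ℝ) ^ (-s) * |Real.sin (θ / 2)| ^ (-s) - 1)

theorem coorbitalF_eq_sin_mul_chord (s θ : ℝ) :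
    coorbitalF s θ = sin θ * (|2 * sin (θ / 2)| ^ (-s) - 1) := by
  rw [coorbitalF, abs_mul, abs_two, mul_rpow zero_le_two (abs_nonneg _)]

theorem coorbitalF_neg (s θ : ℝ) : coorbitalF s (-θ) = -coorbitalF s θ := by
  simp only [coorbitalF, sin_neg, neg_div, abs_neg, neg_mul]

theorem coorbitalF_periodic (s : ℝ) : Function.Periodic (coorbitalF s) (2 * π) := by
  intro θ
  simp only [coorbitalF, sin_add_two_pi, add_div, mul_div_cancel_left₀ π two_ne_zero,
    sin_add_pi, abs_neg]

theorem coorbitalF_sub_pi (s θ : ℝ) :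
    coorbitalF s (θ - π) = -sin θ * (|2 * cos (θ / 2)| ^ (-s) - 1) := by
  rw [coorbitalF_eq_sin_mul_chord, sin_sub_pi, sub_div, sin_sub_pi_div_two, mul_neg, abs_neg]

noncomputable def coorbitalG (s m θ : ℝ) : ℝ :=
  m * coorbitalF s θ + (1 - m) * coorbitalF s (θ - π)

noncomputable def coorbitalPhi (s m θ : ℝ) : ℝ :=
  m * (|2 * sin (θ / 2)| ^ (-s) - 1) - (1 - m) * (|2 * cos (θ / 2)| ^ (-s) - 1)

theorem coorbitalG_eq_sin_mul (s m θ : ℝ) : coorbitalG s m θ = sin θ * coorbitalPhi s m θ := by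
  rw [coorbitalG, coorbitalPhi, coorbitalF_eq_sin_mul_chord, coorbitalF_sub_pi]
  ring

theorem coorbitalG_two_pi_sub (s m θ : ℝ) : coorbitalG s m (2 * π - θ) = -coorbitalG s m θ := by
  have h₁ : coorbitalF s (2 * π - θ) = -coorbitalF s θ := by
    rw [sub_eq_neg_add, coorbitalF_periodic, coorbitalF_neg]
  have h₂ : coorbitalF s (2 * π - θ - π) = -coorbitalF s (θ - π) := by
    rw [← coorbitalF_neg]; ring_nf
  rw [coorbitalG, coorbitalG, h₁, h₂]
  ring

theorem strictMonoOn_two_mul_sin_half : StrictMonoOn (fun θ => 2 * sin (θ / 2)) (Ioo 0 π) := by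
  intro a ⟨ha₀, haπ⟩ b ⟨hb₀, hbπ⟩ hab
  have := strictMonoOn_sin ⟨by linarith, by linarith⟩ ⟨by linarith, by linarith⟩
    (by linarith : a / 2 < b / 2)
  dsimp; linarith

theorem strictAntiOn_two_mul_cos_half : StrictAntiOn (fun θ => 2 * cos (θ / 2)) (Ioo 0 π) := by
  intro a ⟨ha₀, haπ⟩ b ⟨hb₀, hbπ⟩ hab
  have := strictAntiOn_cos ⟨by linarith, by linarith⟩ ⟨by linarith, by linarith⟩
    (by linarith : a / 2 < b / 2)
  dsimp; linarith

theorem two_mul_sin_half_pos {θ : ℝ} (hθ : θ ∈ Ioo 0 π) : 0 < 2 * sin (θ / 2) := by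
  have := sin_pos_of_pos_of_lt_pi (x := θ / 2) (by linarith [hθ.1]) (by linarith [hθ.2, pi_pos])
  positivity

theorem two_mul_cos_half_pos {θ : ℝ} (hθ : θ ∈ Ioo 0 π) : 0 < 2 * cos (θ / 2) := by
  have := cos_pos_of_mem_Ioo (x := θ / 2) ⟨by linarith [hθ.1, pi_pos], by linarith [hθ.2]⟩
  positivity

theorem coorbitalPhi_continuousOn (s m : ℝ) : ContinuousOn (coorbitalPhi s m) (Ioo 0 π) := by
  have hsin : ContinuousOn (fun θ => |2 * sin (θ / 2)| ^ (-s)) (Ioo 0 π) :=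
    ContinuousOn.rpow_const (by fun_prop) fun θ hθ =>
      .inl (abs_pos.2 (two_mul_sin_half_pos hθ).ne').ne'
  have hcos : ContinuousOn (fun θ => |2 * cos (θ / 2)| ^ (-s)) (Ioo 0 π) :=
    ContinuousOn.rpow_const (by fun_prop) fun θ hθ =>
      .inl (abs_pos.2 (two_mul_cos_half_pos hθ).ne').ne'
  unfold coorbitalPhi
  fun_prop

section

variable {s m : ℝ}

theorem coorbitalPhi_strictAntiOn (hs : 0 < s) (hm₀ : 0 < m) (hm₁ : m < 1) :
    StrictAntiOn (coorbitalPhi s m) (Ioo 0 π) := by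
  intro a ha b hb hab
  have hsin : (2 * sin (b / 2)) ^ (-s) < (2 * sin (a / 2)) ^ (-s) :=
    rpow_lt_rpow_of_neg (two_mul_sin_half_pos ha) (strictMonoOn_two_mul_sin_half ha hb hab)
      (neg_lt_zero.2 hs)
  have hcos : (2 * cos (a / 2)) ^ (-s) < (2 * cos (b / 2)) ^ (-s) :=
    rpow_lt_rpow_of_neg (two_mul_cos_half_pos hb) (strictAntiOn_two_mul_cos_half ha hb hab)
      (neg_lt_zero.2 hs)
  simp only [coorbitalPhi, abs_of_pos (two_mul_sin_half_pos ha),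
    abs_of_pos (two_mul_sin_half_pos hb), abs_of_pos (two_mul_cos_half_pos ha),
    abs_of_pos (two_mul_cos_half_pos hb)]
  linarith [mul_lt_mul_of_pos_left hsin hm₀, mul_lt_mul_of_pos_left hcos (sub_pos.2 hm₁)]

theorem abs_two_mul_sqrt_three_div_two : |2 * (√3 / 2)| = √3 := by
  rw [mul_div_cancel₀ _ two_ne_zero, abs_of_pos (by positivity)]

theorem sqrt_three_rpow_neg_lt_one (hs : 0 < s) : √3 ^ (-s) < 1 :=
  rpow_lt_one_of_one_lt_of_neg (by rw [lt_sqrt zero_le_one]; norm_num) (neg_lt_zero.2 hs)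

theorem coorbitalPhi_pi_div_three_pos (hs : 0 < s) (hm₁ : m < 1) :
    0 < coorbitalPhi s m (π / 3) := by
  have h₆ : π / 3 / 2 = π / 6 := by ring
  have h₁ : |2 * (1 / 2 : ℝ)| = 1 := by norm_num
  rw [coorbitalPhi, h₆, sin_pi_div_six, cos_pi_div_six, h₁,
    abs_two_mul_sqrt_three_div_two, one_rpow, sub_self, mul_zero, zero_sub, neg_pos]
  exact mul_neg_of_pos_of_neg (sub_pos.2 hm₁) (sub_neg.2 (sqrt_three_rpow_neg_lt_one hs))

theorem coorbitalPhi_two_pi_div_three_neg (hs : 0 < s) (hm₀ : 0 < m) :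
    coorbitalPhi s m (2 * π / 3) < 0 := by
  have h₆ : 2 * π / 3 / 2 = π / 3 := by ring
  have h₁ : |2 * (1 / 2 : ℝ)| = 1 := by norm_num
  rw [coorbitalPhi, h₆, sin_pi_div_three, cos_pi_div_three, h₁,
    abs_two_mul_sqrt_three_div_two, one_rpow, sub_self, mul_zero, sub_zero]
  exact mul_neg_of_pos_of_neg hm₀ (sub_neg.2 (sqrt_three_rpow_neg_lt_one hs))

theorem coorbitalPhi_existsUnique_eq_zero (hs : 0 < s) (hm₀ : 0 < m) (hm₁ : m < 1) :
    ∃! θ, θ ∈ Ioo 0 π ∧ coorbitalPhi s m θ = 0 := by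
  have hsub : Icc (π / 3) (2 * π / 3) ⊆ Ioo 0 π := fun θ hθ =>
    ⟨by linarith [hθ.1, pi_pos], by linarith [hθ.2, pi_pos]⟩
  obtain ⟨θ₀, hθ₀, hφθ₀⟩ := intermediate_value_Ioo' (by linarith [pi_pos])
    ((coorbitalPhi_continuousOn s m).mono hsub)
    ⟨coorbitalPhi_two_pi_div_three_neg hs hm₀, coorbitalPhi_pi_div_three_pos hs hm₁⟩
  refine ⟨θ₀, ⟨hsub (Ioo_subset_Icc_self hθ₀), hφθ₀⟩, fun θ ⟨hθ, hφθ⟩ => ?_⟩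
  exact (coorbitalPhi_strictAntiOn hs hm₀ hm₁).injOn hθ (hsub (Ioo_subset_Icc_self hθ₀))
    (hφθ.trans hφθ₀.symm)

theorem coorbitalG_existsUnique_eq_zero_Ioo_zero_pi (hs : 0 < s) (hm₀ : 0 < m) (hm₁ : m < 1) :
    ∃! θ, θ ∈ Ioo 0 π ∧ coorbitalG s m θ = 0 := by
  refine (existsUnique_congr fun θ => and_congr_right fun hθ => ?_).1
    (coorbitalPhi_existsUnique_eq_zero hs hm₀ hm₁)
  rw [coorbitalG_eq_sin_mul, mul_eq_zero, or_iff_right (sin_pos_of_pos_of_lt_pi hθ.1 hθ.2).ne']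

theorem coorbitalG_existsUnique_eq_zero_Ioo_pi_two_pi (hs : 0 < s) (hm₀ : 0 < m) (hm₁ : m < 1) :
    ∃! θ, θ ∈ Ioo π (2 * π) ∧ coorbitalG s m θ = 0 := by
  refine ((Equiv.subLeft (2 * π)).existsUnique_congr fun θ => ?_).1
    (coorbitalG_existsUnique_eq_zero_Ioo_zero_pi hs hm₀ hm₁)
  simp only [Equiv.subLeft_apply, coorbitalG_two_pi_sub, neg_eq_zero, mem_Ioo]
  constructor <;> rintro ⟨⟨h₁, h₂⟩, h⟩ <;> exact ⟨⟨by linarith, by linarith⟩, h⟩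

end

/-- Fix `s > 2` and `m₁ ∈ (0,1)`, and let `g(θ) = m₁ f_s(θ) + (1−m₁) f_s(θ − π)`.
Then `g` has exactly one zero in the open interval `(0, π)` and exactly one zero in
the open interval `(π, 2π)`. -/
theorem one_plus_two_plus_one_euler_case (s m₁ : ℝ) (hs : 2 < s)
    (hm₁ : m₁ ∈ Set.Ioo (0 : ℝ) 1) (g : ℝ → ℝ)
    (hg : g = fun θ => m₁ * coorbitalF s θ + (1 - m₁) * coorbitalF s (θ - π)) :
    (∃! θ, θ ∈ Set.Ioo 0 π ∧ g θ = 0) ∧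
    (∃! θ, θ ∈ Set.Ioo π (2 * π) ∧ g θ = 0) := by
  subst hg
  have hs₀ : 0 < s := zero_lt_two.trans hs
  exact ⟨coorbitalG_existsUnique_eq_zero_Ioo_zero_pi hs₀ hm₁.1 hm₁.2,
    coorbitalG_existsUnique_eq_zero_Ioo_pi_two_pi hs₀ hm₁.1 hm₁.2⟩
end

section
/- Consider the Newtonian 1+4 coorbital problem (s = 3) with angles satisfying −π/2 < θ₄ < θ₃ < 0 < θ₂ < θ₁ and θ₁ − θ₄ ≤ π. If there exist positive masses m₁, m₂, m₃, m₄ > 0 with F m = 0, then θ₁ − θ₂ < π/3, θ₂ − θ₃ < π/3, θ₃ − θ₄ < π/3, and θ₁ − θ₄ > π/3. -/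
open Real Matrix

lemma rpow_neg_three (s : ℝ) (hs : 0 < s) : s ^ (-(3:ℝ)) = (s⁻¹)^3 := by
  rw [Real.rpow_neg hs.le, show (3:ℝ) = ((3:ℕ):ℝ) by norm_num, Real.rpow_natCast, ← inv_pow]

lemma coorbitalF_three_eq (x : ℝ) (h0 : 0 < x) (h1 : x ≤ π) :
    coorbitalF 3 x = Real.sin x * (((2 * Real.sin (x/2))⁻¹)^3 - 1) := by
  have hs : 0 < Real.sin (x/2) :=
    Real.sin_pos_of_pos_of_lt_pi (by linarith) (by linarith [Real.pi_pos])
  unfold coorbitalF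
  rw [abs_of_pos hs, rpow_neg_three _ hs, rpow_neg_three 2 (by norm_num), ← mul_pow, ← mul_inv]

lemma sin_half_lt (x : ℝ) (h0 : 0 < x) (h1 : x < π/3) : Real.sin (x/2) < 1/2 := by
  have hpi := Real.pi_pos
  have := Real.strictMonoOn_sin
    (Set.mem_Icc.mpr ⟨by linarith, by linarith⟩)
    (Set.mem_Icc.mpr ⟨by linarith, by linarith⟩) (show x/2 < π/6 by linarith)
  rwa [Real.sin_pi_div_six] at this

lemma sin_half_gt (x : ℝ) (h0 : π/3 < x) (h1 : x ≤ π) : 1/2 < Real.sin (x/2) := by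
  have hpi := Real.pi_pos
  have := Real.strictMonoOn_sin
    (Set.mem_Icc.mpr ⟨by linarith, by linarith⟩)
    (Set.mem_Icc.mpr ⟨by linarith, by linarith⟩) (show π/6 < x/2 by linarith)
  rwa [Real.sin_pi_div_six] at this

lemma coorbitalF_pos (x : ℝ) (h0 : 0 < x) (h1 : x < π/3) : 0 < coorbitalF 3 x := by
  have hpi := Real.pi_pos
  rw [coorbitalF_three_eq x h0 (by linarith)]
  have hsx : 0 < Real.sin x := Real.sin_pos_of_pos_of_lt_pi h0 (by linarith)
  have hs : 0 < Real.sin (x/2) := Real.sin_pos_of_pos_of_lt_pi (by linarith) (by linarith)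
  have hlt := sin_half_lt x h0 h1
  have h2u : 0 < 2 * Real.sin (x/2) := by linarith
  have h2u1 : 2 * Real.sin (x/2) < 1 := by linarith
  have hinv : 1 < (2 * Real.sin (x/2))⁻¹ := (one_lt_inv₀ h2u).mpr h2u1
  have hp : 1 < ((2 * Real.sin (x/2))⁻¹)^3 := one_lt_pow₀ hinv (by norm_num)
  exact mul_pos hsx (by linarith)

lemma coorbitalF_neg_s11 (x : ℝ) (h0 : π/3 < x) (h1 : x < π) : coorbitalF 3 x < 0 := by
  have hpi := Real.pi_pos
  rw [coorbitalF_three_eq x (by linarith) h1.le]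
  have hsx : 0 < Real.sin x := Real.sin_pos_of_pos_of_lt_pi (by linarith) h1
  have hs : 0 < Real.sin (x/2) := Real.sin_pos_of_pos_of_lt_pi (by linarith) (by linarith)
  have hgt := sin_half_gt x h0 h1.le
  have hinv : (2 * Real.sin (x/2))⁻¹ < 1 := inv_lt_one_of_one_lt₀ (by linarith)
  have hinv0 : 0 ≤ (2 * Real.sin (x/2))⁻¹ := by positivity
  have hp : ((2 * Real.sin (x/2))⁻¹)^3 < 1 := pow_lt_one₀ hinv0 hinv (by norm_num)
  exact mul_neg_of_pos_of_neg hsx (by linarith)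

lemma coorbitalF_pi_div_three : coorbitalF 3 (π/3) = 0 := by
  have hpi := Real.pi_pos
  rw [coorbitalF_three_eq (π/3) (by linarith) (by linarith),
    show (π/3)/2 = π/6 by ring, Real.sin_pi_div_six]
  norm_num

lemma coorbitalF_pi : coorbitalF 3 π = 0 := by
  simp [coorbitalF]

lemma coorbitalF_zero : coorbitalF 3 0 = 0 := by
  simp [coorbitalF]

lemma coorbitalF_nonpos (x : ℝ) (h0 : π/3 ≤ x) (h1 : x ≤ π) : coorbitalF 3 x ≤ 0 := by
  rcases eq_or_lt_of_le h0 with h | h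
  · rw [← h, coorbitalF_pi_div_three]
  rcases eq_or_lt_of_le h1 with h' | h'
  · rw [h', coorbitalF_pi]
  exact (coorbitalF_neg_s11 x h h').le

lemma coorbitalF_nonneg (x : ℝ) (h0 : 0 < x) (h1 : x ≤ π/3) : 0 ≤ coorbitalF 3 x := by
  rcases eq_or_lt_of_le h1 with h | h
  · rw [h, coorbitalF_pi_div_three]
  exact (coorbitalF_pos x h0 h).le

lemma coorbitalF_neg_arg (x : ℝ) : coorbitalF 3 (-x) = - coorbitalF 3 x := by
  simp only [coorbitalF, neg_div, Real.sin_neg, abs_neg]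
  ring

/-- Newtonian 1+4 coorbital problem (`s = 3`), convex configuration with
`−π/2 < θ₄ < θ₃ < 0 < θ₂ < θ₁` and `θ₁ − θ₄ ≤ π`.  If there exist positive masses
with `F m = 0` (where `Fᵢⱼ = f₃(θᵢ − θⱼ)`), then `θ₁ − θ₂ < π/3`, `θ₂ − θ₃ < π/3`,
`θ₃ − θ₄ < π/3`, and `θ₁ − θ₄ > π/3`. -/
theorem convex_one_plus_four_angle_bounds
    (θ₁ θ₂ θ₃ θ₄ : ℝ) (h₄ : -(π / 2) < θ₄) (h₄₃ : θ₄ < θ₃) (h₃ : θ₃ < 0)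
    (h₂ : 0 < θ₂) (h₂₁ : θ₂ < θ₁) (hconv : θ₁ - θ₄ ≤ π)
    (m : Fin 4 → ℝ) (hm : ∀ i, 0 < m i)
    (hF : (Matrix.of fun i j : Fin 4 =>
        coorbitalF 3 (![θ₁, θ₂, θ₃, θ₄] i - ![θ₁, θ₂, θ₃, θ₄] j)).mulVec m = 0) :
    θ₁ - θ₂ < π / 3 ∧ θ₂ - θ₃ < π / 3 ∧ θ₃ - θ₄ < π / 3 ∧ π / 3 < θ₁ - θ₄ := by
  have hpi := Real.pi_pos
  have E1 := congrFun hF 0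
  have E3 := congrFun hF 2
  have E4 := congrFun hF 3
  simp [Matrix.mulVec, dotProduct, Fin.sum_univ_four, sub_self, coorbitalF_zero] at E1 E3 E4
  rw [show θ₃ - θ₁ = -(θ₁ - θ₃) by ring, show θ₃ - θ₂ = -(θ₂ - θ₃) by ring,
    coorbitalF_neg_arg, coorbitalF_neg_arg] at E3
  rw [show θ₄ - θ₁ = -(θ₁ - θ₄) by ring, show θ₄ - θ₂ = -(θ₂ - θ₄) by ring,
    show θ₄ - θ₃ = -(θ₃ - θ₄) by ring,
    coorbitalF_neg_arg, coorbitalF_neg_arg, coorbitalF_neg_arg] at E4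
  have hA : θ₁ - θ₂ < π / 3 := by
    by_contra h
    push_neg at h
    have f12 : coorbitalF 3 (θ₁ - θ₂) ≤ 0 := coorbitalF_nonpos _ h (by linarith)
    have f13 : coorbitalF 3 (θ₁ - θ₃) < 0 := coorbitalF_neg_s11 _ (by linarith) (by linarith)
    have f14 : coorbitalF 3 (θ₁ - θ₄) ≤ 0 := coorbitalF_nonpos _ (by linarith) hconv
    nlinarith [mul_nonneg (neg_nonneg.mpr f12) (hm 1).le, mul_pos (neg_pos.mpr f13) (hm 2),
      mul_nonneg (neg_nonneg.mpr f14) (hm 3).le]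
  have hB : θ₃ - θ₄ < π / 3 := by
    by_contra h
    push_neg at h
    have f34 : coorbitalF 3 (θ₃ - θ₄) ≤ 0 := coorbitalF_nonpos _ h (by linarith)
    have f24 : coorbitalF 3 (θ₂ - θ₄) < 0 := coorbitalF_neg_s11 _ (by linarith) (by linarith)
    have f14 : coorbitalF 3 (θ₁ - θ₄) ≤ 0 := coorbitalF_nonpos _ (by linarith) hconv
    nlinarith [mul_nonneg (neg_nonneg.mpr f34) (hm 2).le, mul_pos (neg_pos.mpr f24) (hm 1),
      mul_nonneg (neg_nonneg.mpr f14) (hm 0).le]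
  have hC : θ₂ - θ₃ < π / 3 := by
    by_contra h
    push_neg at h
    have f34 : 0 < coorbitalF 3 (θ₃ - θ₄) := coorbitalF_pos _ (by linarith) hB
    have f23 : coorbitalF 3 (θ₂ - θ₃) ≤ 0 := coorbitalF_nonpos _ h (by linarith)
    have f13 : coorbitalF 3 (θ₁ - θ₃) < 0 := coorbitalF_neg_s11 _ (by linarith) (by linarith)
    nlinarith [mul_pos f34 (hm 3), mul_nonneg (neg_nonneg.mpr f23) (hm 1).le,
      mul_pos (neg_pos.mpr f13) (hm 0)]
  have hD : π / 3 < θ₁ - θ₄ := by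
    by_contra h
    push_neg at h
    have f12 : 0 < coorbitalF 3 (θ₁ - θ₂) := coorbitalF_pos _ (by linarith) hA
    have f13 : 0 ≤ coorbitalF 3 (θ₁ - θ₃) := coorbitalF_nonneg _ (by linarith) (by linarith)
    have f14 : 0 ≤ coorbitalF 3 (θ₁ - θ₄) := coorbitalF_nonneg _ (by linarith) h
    nlinarith [mul_pos f12 (hm 1), mul_nonneg f13 (hm 2).le, mul_nonneg f14 (hm 3).le]
  exact ⟨hA, hC, hB, hD⟩
end
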